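/- arXiv:1201.0814 — 8 statements merged into one kernel-verified Lean document; each statement's English description precedes it below -/
import Mathlib

section
/- If D₁ is a subspace of K with J(D₁) = D₁ and D₂ is the orthogonal complement of D₁ inside K, then: φ(D₁) = D₁; ωX = 0 for every X ∈ D₁; φ(D₂) ⊆ D₂; and B(Kᗮ) ⊆ D₂. -/
/-!
Because `J` preserves inner products and maps `D₁` onto itself, it also maps `D₁ᗮ` into itself.
Projecting onto `K ⊇ D₁` keeps a vector in `D₁ᗮ`, since the part it removes lies in `Kᗮ ⊆ D₁ᗮ`.
On `D₁ ⊆ K` the projections are trivial: `φ = J` and `ω = 0`.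
-/

open Submodule

section

variable {𝕜 E : Type*} [RCLike 𝕜] [NormedAddCommGroup E] [InnerProductSpace 𝕜 E]

theorem LinearIsometry.apply_mem_orthogonal_of_map_eq (f : E →ₗᵢ[𝕜] E) {D : Submodule 𝕜 E}
    (hD : D.map f.toLinearMap = D) {x : E} (hx : x ∈ Dᗮ) : f x ∈ Dᗮ := by
  have hfx : f x ∈ Dᗮ.map f.toLinearMap := mem_map_of_mem hx
  rw [map_orthogonal, hD] at hfx
  exact hfx.1

theorem Submodule.orthogonalProjectionOnto_mem_orthogonal_of_le {D K : Submodule 𝕜 E}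
    [K.HasOrthogonalProjection] (hDK : D ≤ K) {x : E} (hx : x ∈ Dᗮ) :
    (K.orthogonalProjectionOnto x : E) ∈ Dᗮ := by
  rw [← starProjection_apply, ← sub_sub_cancel x (K.starProjection x)]
  exact sub_mem hx (orthogonal_le hDK (K.sub_starProjection_mem_orthogonal x))

end

theorem stmt_2_general {V : Type*} [NormedAddCommGroup V] [InnerProductSpace ℝ V]
    [FiniteDimensional ℝ V]
    (J : V →ₗ[ℝ] V) (hJiso : ∀ v : V, ‖J v‖ = ‖v‖)
    (K : Submodule ℝ V)
    (φ : K → K) (ω : K → Kᗮ) (B : Kᗮ → K)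
    (hφ : ∀ X : K, φ X = K.orthogonalProjectionOnto (J (X : V)))
    (hω : ∀ X : K, ω X = Kᗮ.orthogonalProjectionOnto (J (X : V)))
    (hB : ∀ Z : Kᗮ, B Z = K.orthogonalProjectionOnto (J (Z : V)))
    (D₁ D₂ : Submodule ℝ V) (hD₁K : D₁ ≤ K) (hJD₁ : D₁.map J = D₁)
    (hD₂ : D₂ = D₁ᗮ ⊓ K) :
    (∀ X : K, (X : V) ∈ D₁ → (φ X : V) ∈ D₁) ∧
    (∀ Y : K, (Y : V) ∈ D₁ → ∃ X : K, (X : V) ∈ D₁ ∧ φ X = Y) ∧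
    (∀ X : K, (X : V) ∈ D₁ → ω X = 0) ∧
    (∀ X : K, (X : V) ∈ D₂ → (φ X : V) ∈ D₂) ∧
    (∀ Z : Kᗮ, (B Z : V) ∈ D₂) := by
  subst hD₂
  have hJ_mem : ∀ x ∈ D₁, J x ∈ D₁ := fun x hx => hJD₁ ▸ mem_map_of_mem hx
  have hJ_mem_orthogonal : ∀ x ∈ D₁ᗮ, J x ∈ D₁ᗮ := fun _ hx =>
    (⟨J, hJiso⟩ : V →ₗᵢ[ℝ] V).apply_mem_orthogonal_of_map_eq hJD₁ hx
  have hφ_of_mem (X : K) (hX : (X : V) ∈ D₁) : φ X = ⟨J X, hD₁K (hJ_mem X hX)⟩ := by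
    rw [hφ, ← orthogonalProjectionOnto_mem_subspace_eq_self ⟨J X, hD₁K (hJ_mem X hX)⟩]
  refine ⟨fun X hX => ?_, fun Y hY => ?_, fun X hX => ?_, fun X hX => ?_, fun Z => ?_⟩
  · rw [hφ_of_mem X hX]
    exact hJ_mem X hX
  · obtain ⟨x, hx, hxY⟩ : (Y : V) ∈ D₁.map J := hJD₁.symm ▸ hY
    exact ⟨⟨x, hD₁K hx⟩, hx, (hφ_of_mem _ hx).trans (Subtype.ext hxY)⟩
  · rw [hω]
    exact orthogonalProjectionOnto_apply_of_mem_orthogonal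
      (K.le_orthogonal_orthogonal (hD₁K (hJ_mem X hX)))
  · rw [hφ]
    exact ⟨orthogonalProjectionOnto_mem_orthogonal_of_le hD₁K (hJ_mem_orthogonal X hX.1),
      coe_mem _⟩
  · rw [hB]
    exact ⟨orthogonalProjectionOnto_mem_orthogonal_of_le hD₁K
      (hJ_mem_orthogonal Z (orthogonal_le hD₁K Z.2)), coe_mem _⟩

/-- If `D₁ ⊆ K` with `J(D₁) = D₁` and `D₂` is the orthogonal complement
of `D₁` inside `K`, then `φ(D₁) = D₁`, `ω = 0` on `D₁`, `φ(D₂) ⊆ D₂` and `B(Kᗮ) ⊆ D₂`. -/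
theorem stmt_2 {V : Type*} [NormedAddCommGroup V] [InnerProductSpace ℝ V]
    [FiniteDimensional ℝ V]
    (J : V →ₗ[ℝ] V) (hJiso : ∀ v : V, ‖J v‖ = ‖v‖) (hJ2 : ∀ v : V, J (J v) = -v)
    (K : Submodule ℝ V)
    (φ : K → K) (ω : K → Kᗮ) (B : Kᗮ → K)
    (hφ : ∀ X : K, φ X = K.orthogonalProjectionOnto (J (X : V)))
    (hω : ∀ X : K, ω X = Kᗮ.orthogonalProjectionOnto (J (X : V)))
    (hB : ∀ Z : Kᗮ, B Z = K.orthogonalProjectionOnto (J (Z : V)))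
    (D₁ D₂ : Submodule ℝ V) (hD₁K : D₁ ≤ K) (hJD₁ : D₁.map J = D₁)
    (hD₂ : D₂ = D₁ᗮ ⊓ K) :
    (∀ X : K, (X : V) ∈ D₁ → (φ X : V) ∈ D₁) ∧
    (∀ Y : K, (Y : V) ∈ D₁ → ∃ X : K, (X : V) ∈ D₁ ∧ φ X = Y) ∧
    (∀ X : K, (X : V) ∈ D₁ → ω X = 0) ∧
    (∀ X : K, (X : V) ∈ D₂ → (φ X : V) ∈ D₂) ∧
    (∀ Z : Kᗮ, (B Z : V) ∈ D₂) :=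
  stmt_2_general J hJiso K φ ω B hφ hω hB D₁ D₂ hD₁K hJD₁ hD₂
end

section
/- Suppose the configuration (J, K, D₁, D₂) is semi-slant with angle θ, i.e. for every nonzero X ∈ D₂ the angle between JX and its orthogonal projection onto D₂ equals θ. Then φ(φX) = −(cos θ)² · X for every X ∈ D₂. -/
/-!
On `D₂` the map `φ` agrees with the compression `T = P_{D₂} ∘ J` of `J` to `D₂`, because `J`
preserves `D₁ᗮ` and `D₂ ≤ K`. Since `J` is skew-adjoint, so is `T`. For an orthogonal projection
`p` of `v` one has `⟪v, p⟫ = ‖p‖²`, hence `‖p‖ = cos ∠(v, p) · ‖v‖`; so the slant condition says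
`‖T x‖ = cos θ · ‖x‖`. Polarization gives `⟪T x, T y⟫ = cos² θ · ⟪x, y⟫`, and skewness turns this
into `⟪T (T x), y⟫ = -cos² θ · ⟪x, y⟫` for all `y ∈ D₂`.
-/

open InnerProductGeometry InnerProductSpace

section

variable {E : Type*} [NormedAddCommGroup E] [InnerProductSpace ℝ E]

lemma inner_map_map_of_norm_map_eq_mul {T : E →ₗ[ℝ] E} {c : ℝ} (hT : ∀ x, ‖T x‖ = c * ‖x‖)
    (x y : E) : ⟪T x, T y⟫_ℝ = c ^ 2 * ⟪x, y⟫_ℝ := by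
  rw [real_inner_eq_norm_add_mul_self_sub_norm_mul_self_sub_norm_mul_self_div_two,
    real_inner_eq_norm_add_mul_self_sub_norm_mul_self_sub_norm_mul_self_div_two x y,
    ← map_add, hT, hT, hT]
  ring

lemma map_map_eq_neg_sq_smul_of_skew {T : E →ₗ[ℝ] E} {c : ℝ}
    (hskew : ∀ x y, ⟪T x, y⟫_ℝ = -⟪x, T y⟫_ℝ) (hT : ∀ x, ‖T x‖ = c * ‖x‖) (x : E) :
    T (T x) = -(c ^ 2) • x := by
  refine ext_inner_right ℝ fun y => ?_
  rw [hskew, inner_map_map_of_norm_map_eq_mul hT, real_inner_smul_left, neg_mul]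

lemma inner_map_left_eq_neg_inner_map_right {J : E →ₗ[ℝ] E} (hJiso : ∀ v, ‖J v‖ = ‖v‖)
    (hJ2 : ∀ v, J (J v) = -v) (x y : E) : ⟪J x, y⟫_ℝ = -⟪x, J y⟫_ℝ := by
  rw [← (LinearMap.norm_map_iff_inner_map_map J).mp hJiso (J x) y, hJ2, inner_neg_left]

lemma map_mem_orthogonal_of_skew {J : E →ₗ[ℝ] E} (hskew : ∀ x y, ⟪J x, y⟫_ℝ = -⟪x, J y⟫_ℝ)
    {U : Submodule ℝ E} (hU : U.map J ≤ U) {v : E} (hv : v ∈ Uᗮ) : J v ∈ Uᗮ := by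
  intro z hz
  rw [← neg_eq_zero, ← hskew]
  exact hv _ (hU (Submodule.mem_map_of_mem hz))

namespace Submodule

lemma starProjection_mem_orthogonal_of_le {U K : Submodule ℝ E} [K.HasOrthogonalProjection]
    (h : U ≤ K) {v : E} (hv : v ∈ Uᗮ) : K.starProjection v ∈ Uᗮ := by
  have := orthogonal_le h (K.sub_starProjection_mem_orthogonal v)
  simpa using Uᗮ.sub_mem hv this

lemma starProjection_eq_of_le_of_mem {U K : Submodule ℝ E} [U.HasOrthogonalProjection]
    [K.HasOrthogonalProjection] (h : U ≤ K) {v : E} (hv : K.starProjection v ∈ U) :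
    U.starProjection v = K.starProjection v := by
  rw [← U.starProjection_comp_starProjection_of_le h, ContinuousLinearMap.comp_apply,
    U.starProjection_eq_self_iff.mpr hv]

lemma norm_starProjection_eq_cos_angle_mul_norm (U : Submodule ℝ E) [U.HasOrthogonalProjection]
    (v : E) : ‖U.starProjection v‖ = Real.cos (angle v (U.starProjection v)) * ‖v‖ := by
  by_cases hp : U.starProjection v = 0
  · simp [hp]
  have key : Real.cos (angle v (U.starProjection v)) * ‖v‖ * ‖U.starProjection v‖
      = ‖U.starProjection v‖ * ‖U.starProjection v‖ := by
    rw [mul_assoc, cos_angle_mul_norm_mul_norm, real_inner_comm, ← sq]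
    simpa using U.re_inner_starProjection_eq_normSq v
  exact (mul_right_cancel₀ (norm_ne_zero_iff.mpr hp) key).symm

variable (U : Submodule ℝ E) [U.HasOrthogonalProjection] (J : E →ₗ[ℝ] E)

noncomputable def compression : U →ₗ[ℝ] U :=
  U.orthogonalProjectionOnto.toLinearMap ∘ₗ J ∘ₗ U.subtype

@[simp]
lemma coe_compression_apply (x : U) : (U.compression J x : E) = U.starProjection (J x) := rfl

variable {U J}

lemma inner_compression_left (x y : U) : ⟪U.compression J x, y⟫_ℝ = ⟪J x, y⟫_ℝ := by
  simp [compression]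

lemma compression_skew (hskew : ∀ x y, ⟪J x, y⟫_ℝ = -⟪x, J y⟫_ℝ) (x y : U) :
    ⟪U.compression J x, y⟫_ℝ = -⟪x, U.compression J y⟫_ℝ := by
  calc ⟪U.compression J x, y⟫_ℝ = ⟪J x, y⟫_ℝ := inner_compression_left x y
    _ = -⟪(x : E), J y⟫_ℝ := hskew x y
    _ = -⟪x, U.compression J y⟫_ℝ := by
      rw [real_inner_comm, ← inner_compression_left, real_inner_comm]

lemma norm_compression {θ : ℝ} (hJiso : ∀ v, ‖J v‖ = ‖v‖)
    (hθ : ∀ x : U, x ≠ 0 → angle (J x) (U.compression J x) = θ) (x : U) :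
    ‖U.compression J x‖ = Real.cos θ * ‖x‖ := by
  rcases eq_or_ne x 0 with rfl | hx
  · simp
  rw [← hθ x hx, coe_norm, coe_compression_apply, norm_starProjection_eq_cos_angle_mul_norm,
    hJiso, coe_norm]

end Submodule

end

theorem stmt_3_general {V : Type*} [NormedAddCommGroup V] [InnerProductSpace ℝ V]
    [FiniteDimensional ℝ V]
    (J : V →ₗ[ℝ] V) (hJiso : ∀ v : V, ‖J v‖ = ‖v‖) (hJ2 : ∀ v : V, J (J v) = -v)
    (K : Submodule ℝ V)
    (φ : K → K)
    (hφ : ∀ X : K, φ X = Submodule.orthogonalProjectionOnto K (J (X : V)))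
    (D₁ D₂ : Submodule ℝ V) (hD₁K : D₁ ≤ K) (hJD₁ : D₁.map J = D₁)
    (hD₂ : D₂ = D₁ᗮ ⊓ K)
    (θ : ℝ)
    (hslant : ∀ X : V, X ∈ D₂ → X ≠ 0 →
      InnerProductGeometry.angle (J X) (Submodule.orthogonalProjectionOnto D₂ (J X) : V) = θ) :
    ∀ X : K, (X : V) ∈ D₂ → φ (φ X) = (-(Real.cos θ ^ 2)) • X := by
  have hskew := inner_map_left_eq_neg_inner_map_right hJiso hJ2
  have hφ_eq (Y : K) (hY : (Y : V) ∈ D₂) : (φ Y : V) = D₂.compression J ⟨Y, hY⟩ := by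
    have hmem : K.starProjection (J Y) ∈ D₂ := by
      rw [hD₂] at hY ⊢
      exact ⟨Submodule.starProjection_mem_orthogonal_of_le hD₁K
        (map_mem_orthogonal_of_skew hskew hJD₁.le hY.1), K.starProjection_apply_mem _⟩
    rw [hφ, Submodule.coe_orthogonalProjectionOnto_apply, Submodule.coe_compression_apply,
      Submodule.starProjection_eq_of_le_of_mem (hD₂ ▸ inf_le_right) hmem]
  have hnorm := Submodule.norm_compression hJiso fun x hx => hslant x x.2 (by simpa using hx)
  intro X hX
  have hφX_mem : (φ X : V) ∈ D₂ := hφ_eq X hX ▸ (D₂.compression J _).2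
  apply Subtype.ext
  calc (φ (φ X) : V) = D₂.compression J (D₂.compression J ⟨X, hX⟩) := by
        rw [hφ_eq _ hφX_mem]
        congr 2
        exact Subtype.ext (hφ_eq X hX)
    _ = ((-(Real.cos θ ^ 2)) • (⟨X, hX⟩ : D₂) : D₂) :=
        congrArg _ (map_map_eq_neg_sq_smul_of_skew (Submodule.compression_skew hskew) hnorm _)
    _ = _ := rfl

/-- If the configuration `(J, K, D₁, D₂)` is semi-slant with angle `θ`
(for every nonzero `X ∈ D₂` the angle between `JX` and its orthogonal projection onto
`D₂` equals `θ`), then `φ(φX) = -(cos θ)² • X` for every `X ∈ D₂`. -/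
theorem stmt_3 {V : Type*} [NormedAddCommGroup V] [InnerProductSpace ℝ V]
    [FiniteDimensional ℝ V]
    (J : V →ₗ[ℝ] V) (hJiso : ∀ v : V, ‖J v‖ = ‖v‖) (hJ2 : ∀ v : V, J (J v) = -v)
    (K : Submodule ℝ V)
    (φ : K → K) (ω : K → Kᗮ)
    (hφ : ∀ X : K, φ X = Submodule.orthogonalProjectionOnto K (J (X : V)))
    (hω : ∀ X : K, ω X = Submodule.orthogonalProjectionOnto Kᗮ (J (X : V)))
    (D₁ D₂ : Submodule ℝ V) (hD₁K : D₁ ≤ K) (hJD₁ : D₁.map J = D₁)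
    (hD₂ : D₂ = D₁ᗮ ⊓ K)
    (θ : ℝ)
    (hslant : ∀ X : V, X ∈ D₂ → X ≠ 0 →
      InnerProductGeometry.angle (J X) (Submodule.orthogonalProjectionOnto D₂ (J X) : V) = θ) :
    ∀ X : K, (X : V) ∈ D₂ → φ (φ X) = (-(Real.cos θ ^ 2)) • X :=
  stmt_3_general J hJiso hJ2 K φ hφ D₁ D₂ hD₁K hJD₁ hD₂ θ hslant
end

section
/- Suppose θ ∈ [0, π/2] and φ(φX) = −(cos θ)² · X for every X ∈ D₂. Then for every nonzero X ∈ D₂ the angle between JX and its orthogonal projection onto D₂ equals θ; that is, the configuration (J, K, D₁, D₂) is semi-slant with angle θ. -/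
/-!
Since `J` is skew-adjoint and preserves `D₁`, it maps `D₂ ⊆ D₁ᗮ` into `D₁ᗮ`; hence for `X ∈ D₂`
the projection of `JX` onto `K` already lies in `D₂`, so the projection onto `D₂` is `φX`. The angle
between `JX` and its projection `φX` has cosine `‖φX‖ / ‖JX‖ = ‖φX‖ / ‖X‖`, and skewness gives
`‖φX‖² = -⟪φ(φX), X⟫ = cos² θ ‖X‖²`.
-/

open RealInnerProductSpace

section

variable {V : Type*} [NormedAddCommGroup V] [InnerProductSpace ℝ V]

namespace Submodule

lemma real_inner_starProjection_self (K : Submodule ℝ V) [K.HasOrthogonalProjection] (v : V) :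
    ⟪K.starProjection v, v⟫ = ‖K.starProjection v‖ ^ 2 := by
  have h := K.inner_starProjection_left_eq_right (K.starProjection v) v
  rw [starProjection_eq_self_iff.mpr (K.starProjection_apply_mem v)] at h
  rw [h, real_inner_self_eq_norm_sq]

lemma starProjection_orthogonal_inf_eq {K L : Submodule ℝ V} [K.HasOrthogonalProjection]
    [(Lᗮ ⊓ K).HasOrthogonalProjection] (hLK : L ≤ K) {v : V} (hv : v ∈ Lᗮ) :
    (Lᗮ ⊓ K).starProjection v = K.starProjection v := by
  have hmem : K.starProjection v ∈ Lᗮ ⊓ K := by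
    refine ⟨fun z hz => ?_, K.starProjection_apply_mem v⟩
    rw [← inner_starProjection_left_eq_right, starProjection_eq_self_iff.mpr (hLK hz)]
    exact hv z hz
  rw [← starProjection_eq_self_iff.mpr hmem, starProjection_apply, starProjection_apply,
    orthogonalProjectionOnto_starProjection_of_le inf_le_right]

end Submodule

lemma InnerProductGeometry.angle_self_starProjection (K : Submodule ℝ V)
    [K.HasOrthogonalProjection] (x : V) :
    angle x (K.starProjection x) = Real.arccos (‖K.starProjection x‖ / ‖x‖) := by
  rw [angle, real_inner_comm, K.real_inner_starProjection_self]
  rcases eq_or_ne ‖K.starProjection x‖ 0 with h | h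
  · simp [h]
  · rw [sq, mul_comm ‖x‖, mul_div_mul_left _ _ h]

section SkewAdjoint

variable {J : V →ₗ[ℝ] V}

lemma inner_map_left_eq_neg_of_norm_map_of_map_map
    (hJiso : ∀ v, ‖J v‖ = ‖v‖) (hJ2 : ∀ v, J (J v) = -v) (x y : V) :
    ⟪J x, y⟫ = -⟪x, J y⟫ := by
  have h := (LinearIsometry.mk J hJiso).inner_map_map x (J y)
  simp only [LinearIsometry.coe_mk, hJ2, inner_neg_right] at h
  linarith

variable (hskew : ∀ x y, ⟪J x, y⟫ = -⟪x, J y⟫)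
include hskew

lemma map_mem_orthogonal_of_map_le {L : Submodule ℝ V} (hJL : L.map J ≤ L) {v : V}
    (hv : v ∈ Lᗮ) : J v ∈ Lᗮ := fun z hz => by
  rw [real_inner_comm, hskew, real_inner_comm, hv (J z) (hJL (Submodule.mem_map_of_mem hz)),
    neg_zero]

lemma inner_starProjection_map_starProjection_map (K : Submodule ℝ V)
    [K.HasOrthogonalProjection] {x : V} (hx : x ∈ K) :
    ⟪K.starProjection (J (K.starProjection (J x))), x⟫ = -‖K.starProjection (J x)‖ ^ 2 := by
  rw [Submodule.inner_starProjection_left_eq_right, Submodule.starProjection_eq_self_iff.mpr hx,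
    hskew, K.real_inner_starProjection_self]

end SkewAdjoint

end

/-- Converse of Proposition 2.8. If `θ ∈ [0, π/2]` and
`φ(φX) = -(cos θ)² • X` for every `X ∈ D₂`, then for every nonzero `X ∈ D₂` the angle
between `JX` and its orthogonal projection onto `D₂` equals `θ`. -/
theorem stmt_4 {V : Type*} [NormedAddCommGroup V] [InnerProductSpace ℝ V]
    [FiniteDimensional ℝ V]
    (J : V →ₗ[ℝ] V) (hJiso : ∀ v : V, ‖J v‖ = ‖v‖) (hJ2 : ∀ v : V, J (J v) = -v)
    (K : Submodule ℝ V)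
    (φ : K → K)
    (hφ : ∀ X : K, φ X = Submodule.orthogonalProjectionOnto K (J (X : V)))
    (D₁ D₂ : Submodule ℝ V) (hD₁K : D₁ ≤ K) (hJD₁ : D₁.map J = D₁)
    (hD₂ : D₂ = D₁ᗮ ⊓ K)
    (θ : ℝ) (hθ : θ ∈ Set.Icc 0 (Real.pi / 2))
    (hφ2 : ∀ X : K, (X : V) ∈ D₂ → φ (φ X) = (-(Real.cos θ ^ 2)) • X) :
    ∀ X : V, X ∈ D₂ → X ≠ 0 →
      InnerProductGeometry.angle (J X) (Submodule.orthogonalProjectionOnto D₂ (J X) : V) = θ := by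
  subst hD₂
  intro X hX hX0
  have hskew := inner_map_left_eq_neg_of_norm_map_of_map_map hJiso hJ2
  have hproj : (D₁ᗮ ⊓ K).starProjection (J X) = K.starProjection (J X) :=
    Submodule.starProjection_orthogonal_inf_eq hD₁K
      (map_mem_orthogonal_of_map_le hskew hJD₁.le hX.1)
  have hcos : 0 ≤ Real.cos θ :=
    Real.cos_nonneg_of_mem_Icc ⟨by linarith [Real.pi_pos, hθ.1], hθ.2⟩
  have hnorm : ‖K.starProjection (J X)‖ = Real.cos θ * ‖X‖ := by
    have h := congrArg (fun Y : K => ⟪(Y : V), X⟫) (hφ2 ⟨X, hX.2⟩ hX)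
    simp only [hφ, Submodule.coe_orthogonalProjectionOnto_apply, Submodule.coe_smul,
      inner_smul_left, real_inner_self_eq_norm_sq, RCLike.conj_to_real,
      inner_starProjection_map_starProjection_map hskew K hX.2] at h
    rw [← sq_eq_sq₀ (norm_nonneg _) (by positivity)]
    linarith
  rw [Submodule.coe_orthogonalProjectionOnto_apply, InnerProductGeometry.angle_self_starProjection,
    hproj, hnorm, hJiso, mul_div_cancel_right₀ _ (norm_ne_zero_iff.mpr hX0)]
  exact Real.arccos_cos hθ.1 (by linarith [Real.pi_pos, hθ.2])
end

section
/- Suppose the configuration (J, K, D₁, D₂) is semi-slant with angle θ and θ ∈ [0, π/2). Define Ĵ : K → K by ĴX = J(PX) + (1/cos θ) · φ(QX), where P and Q are the orthogonal projections of K onto D₁ and D₂. Then Ĵ(ĴX) = −X for every X ∈ K, i.e. Ĵ is a complex structure on K. -/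
/-!
The restriction of `J` to `D₁` is already a complex structure, so everything happens on the slant
part `D₂ = D₁ᗮ ⊓ K`. There `T = proj_{D₂} ∘ J` agrees with `φ` (because `J` is skew and preserves
`D₁`, the vector `J X` is orthogonal to `D₁`), it is skew-adjoint, and the slant angle says
`‖T X‖ = cos θ ‖X‖`. A skew-adjoint map scaling every norm by `c` satisfies `T² = -c²`, so
`(T / cos θ)² = -1` on `D₂`, while `Ĵ` preserves the splitting `K = D₁ ⊕ D₂`.
-/

open RealInnerProductSpace InnerProductGeometry Submodule

section InnerProductSpace

variable {E : Type*} [NormedAddCommGroup E] [InnerProductSpace ℝ E]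

theorem Submodule.norm_starProjection_eq_cos_angle_mul_norm_s6 (U : Submodule ℝ E)
    [U.HasOrthogonalProjection] (u : E) :
    ‖U.starProjection u‖ = Real.cos (angle u (U.starProjection u)) * ‖u‖ := by
  rcases eq_or_ne (U.starProjection u) 0 with h | h
  · rw [h, angle_zero_right, Real.cos_pi_div_two, norm_zero, zero_mul]
  · have hinner : ⟪u, U.starProjection u⟫ = ‖U.starProjection u‖ * ‖U.starProjection u‖ := by
      have := U.starProjection_inner_eq_zero u _ (U.starProjection_apply_mem u)
      rw [inner_sub_left, real_inner_self_eq_norm_mul_norm] at this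
      linarith
    have hcos := cos_angle_mul_norm_mul_norm u (U.starProjection u)
    rw [hinner] at hcos
    apply mul_right_cancel₀ (norm_ne_zero_iff.mpr h)
    linarith

theorem Submodule.starProjection_eq_of_le_of_mem_s6 {U W : Submodule ℝ E} [U.HasOrthogonalProjection]
    [W.HasOrthogonalProjection] (hWU : W ≤ U) {v : E} (hv : U.starProjection v ∈ W) :
    W.starProjection v = U.starProjection v := by
  rw [← starProjection_comp_starProjection_of_le hWU, ContinuousLinearMap.comp_apply,
    starProjection_eq_self_iff.mpr hv]

theorem Submodule.starProjection_inf_orthogonal_eq_starProjection {D K : Submodule ℝ E}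
    [K.HasOrthogonalProjection] [(Dᗮ ⊓ K).HasOrthogonalProjection] (hDK : D ≤ K) {v : E}
    (hv : v ∈ Dᗮ) : (Dᗮ ⊓ K).starProjection v = K.starProjection v := by
  refine starProjection_eq_of_le_of_mem_s6 inf_le_right ⟨?_, K.starProjection_apply_mem v⟩
  refine (mem_orthogonal D _).mpr fun d hd => ?_
  rw [← inner_starProjection_left_eq_right, starProjection_eq_self_iff.mpr (hDK hd)]
  exact inner_right_of_mem_orthogonal hd hv

theorem Submodule.starProjection_inf_orthogonal_eq_sub {D K : Submodule ℝ E}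
    [D.HasOrthogonalProjection] [(Dᗮ ⊓ K).HasOrthogonalProjection] (hDK : D ≤ K) {v : E}
    (hv : v ∈ K) : (Dᗮ ⊓ K).starProjection v = v - D.starProjection v := by
  have hmem : Dᗮ.starProjection v ∈ Dᗮ ⊓ K := by
    rw [starProjection_orthogonal_val]
    exact ⟨sub_starProjection_mem_orthogonal v, K.sub_mem hv (hDK (D.starProjection_apply_mem v))⟩
  rw [starProjection_eq_of_le_of_mem_s6 inf_le_left hmem, starProjection_orthogonal_val]

namespace LinearMap

theorem inner_map_map_of_norm_map_eq_mul (T : E →ₗ[ℝ] E) {c : ℝ} (hT : ∀ x, ‖T x‖ = c * ‖x‖)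
    (x y : E) : ⟪T x, T y⟫ = c ^ 2 * ⟪x, y⟫ := by
  rw [real_inner_eq_norm_add_mul_self_sub_norm_mul_self_sub_norm_mul_self_div_two,
    real_inner_eq_norm_add_mul_self_sub_norm_mul_self_sub_norm_mul_self_div_two x y,
    ← map_add, hT, hT, hT]
  ring

theorem map_map_eq_neg_sq_smul (T : E →ₗ[ℝ] E) (hskew : ∀ x y, ⟪T x, y⟫ = -⟪x, T y⟫) {c : ℝ}
    (hT : ∀ x, ‖T x‖ = c * ‖x‖) (x : E) : T (T x) = -(c ^ 2) • x :=
  ext_inner_right ℝ fun y => by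
    rw [hskew, inner_map_map_of_norm_map_eq_mul T hT, real_inner_smul_left, neg_mul]

theorem inner_map_eq_neg_inner_map_of_isometry {J : E →ₗ[ℝ] E} (hJiso : ∀ v, ‖J v‖ = ‖v‖)
    (hJ2 : ∀ v, J (J v) = -v) (x y : E) : ⟪J x, y⟫ = -⟪x, J y⟫ := by
  have h := (⟨J, hJiso⟩ : E →ₗᵢ[ℝ] E).inner_map_map x (J y)
  simp only [LinearIsometry.coe_mk, hJ2, inner_neg_right] at h
  linarith

theorem map_mem_orthogonal {J : E →ₗ[ℝ] E} (hskew : ∀ x y, ⟪J x, y⟫ = -⟪x, J y⟫)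
    {D : Submodule ℝ E} (hJD : D.map J ≤ D) {y : E} (hy : y ∈ Dᗮ) : J y ∈ Dᗮ :=
  (mem_orthogonal D _).mpr fun u hu => by
    linarith [hskew u y, inner_right_of_mem_orthogonal (hJD (mem_map_of_mem hu)) hy]

noncomputable def compression (J : E →ₗ[ℝ] E) (D : Submodule ℝ E) [D.HasOrthogonalProjection] :
    D →ₗ[ℝ] D :=
  (D.orthogonalProjectionOnto : E →ₗ[ℝ] D) ∘ₗ J ∘ₗ D.subtype

variable {J : E →ₗ[ℝ] E} {D : Submodule ℝ E} [D.HasOrthogonalProjection]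

theorem coe_compression_apply (x : D) : (J.compression D x : E) = D.starProjection (J x) := rfl

theorem inner_compression_left (hskew : ∀ x y, ⟪J x, y⟫ = -⟪x, J y⟫) (x y : D) :
    ⟪J.compression D x, y⟫ = -⟪x, J.compression D y⟫ := by
  simp only [coe_inner, coe_compression_apply, inner_starProjection_left_eq_right,
    ← inner_starProjection_left_eq_right _ _ (J y), starProjection_mem_subspace_eq_self, hskew]

theorem norm_compression_apply {θ : ℝ} (hJiso : ∀ v, ‖J v‖ = ‖v‖)
    (hslant : ∀ x ∈ D, x ≠ 0 → angle (J x) (D.starProjection (J x)) = θ) (x : D) :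
    ‖J.compression D x‖ = Real.cos θ * ‖x‖ := by
  rcases eq_or_ne x 0 with rfl | hx
  · simp
  · rw [coe_norm, coe_compression_apply, norm_starProjection_eq_cos_angle_mul_norm_s6,
      hslant x x.2 (by simpa using hx), hJiso, coe_norm]

end LinearMap

end InnerProductSpace

section SemiSlant

variable {V : Type*} [NormedAddCommGroup V] [InnerProductSpace ℝ V]

/-- The paper's `Ĵ` with `c = cos θ`, extended to all of `V`; `φ` on `D₂ = D₁ᗮ ⊓ K` is
`proj_{D₂} ∘ J`. -/
noncomputable def semiSlantStructure (J : V →ₗ[ℝ] V) (D₁ K : Submodule ℝ V)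
    [D₁.HasOrthogonalProjection] [(D₁ᗮ ⊓ K).HasOrthogonalProjection] (c : ℝ) (x : V) : V :=
  J (D₁.starProjection x) + c⁻¹ • (D₁ᗮ ⊓ K).starProjection (J ((D₁ᗮ ⊓ K).starProjection x))

theorem semiSlantStructure_semiSlantStructure {J : V →ₗ[ℝ] V} (hJiso : ∀ v, ‖J v‖ = ‖v‖)
    (hJ2 : ∀ v, J (J v) = -v) {D₁ K : Submodule ℝ V} [D₁.HasOrthogonalProjection]
    [(D₁ᗮ ⊓ K).HasOrthogonalProjection] (hD₁K : D₁ ≤ K) (hJD₁ : D₁.map J ≤ D₁) {θ : ℝ}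
    (hcos : Real.cos θ ≠ 0)
    (hslant : ∀ x ∈ D₁ᗮ ⊓ K, x ≠ 0 → angle (J x) ((D₁ᗮ ⊓ K).starProjection (J x)) = θ)
    {x : V} (hx : x ∈ K) :
    semiSlantStructure J D₁ K (Real.cos θ) (semiSlantStructure J D₁ K (Real.cos θ) x) = -x := by
  set D₂ := D₁ᗮ ⊓ K
  set c := Real.cos θ
  set p := D₁.starProjection x
  set q := D₂.starProjection x
  have hp : p ∈ D₁ := D₁.starProjection_apply_mem x
  have hq : q ∈ D₂ := D₂.starProjection_apply_mem x
  have hpq : p + q = x := by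
    rw [show q = x - p from starProjection_inf_orthogonal_eq_sub hD₁K hx, add_sub_cancel]
  have hJp : J p ∈ D₁ := hJD₁ (mem_map_of_mem hp)
  have hTq : c⁻¹ • D₂.starProjection (J q) ∈ D₂ := D₂.smul_mem _ (D₂.starProjection_apply_mem _)
  have hskew := LinearMap.inner_map_eq_neg_inner_map_of_isometry hJiso hJ2
  have hTT : D₂.starProjection (J (D₂.starProjection (J q))) = -(c ^ 2) • q :=
    congrArg Subtype.val <| (J.compression D₂).map_map_eq_neg_sq_smul
      (LinearMap.inner_compression_left hskew) (LinearMap.norm_compression_apply hJiso hslant)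
      ⟨q, hq⟩
  have hP : D₁.starProjection (semiSlantStructure J D₁ K c x) = J p :=
    eq_starProjection_of_mem_orthogonal' hJp hTq.1 rfl
  have hQ : D₂.starProjection (semiSlantStructure J D₁ K c x) = c⁻¹ • D₂.starProjection (J q) :=
    eq_starProjection_of_mem_orthogonal' hTq
      (orthogonal_le inf_le_left (D₁.le_orthogonal_orthogonal hJp)) (add_comm _ _)
  calc semiSlantStructure J D₁ K c (semiSlantStructure J D₁ K c x)
      = J (J p) + c⁻¹ • D₂.starProjection (J (c⁻¹ • D₂.starProjection (J q))) := by
        rw [semiSlantStructure, hP, hQ]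
    _ = -p + (c⁻¹ * c⁻¹ * -c ^ 2) • q := by rw [hJ2, map_smul, map_smul, hTT, smul_smul, smul_smul]
    _ = -x := by
        rw [show c⁻¹ * c⁻¹ * -c ^ 2 = -1 by field_simp, neg_one_smul, ← neg_add, hpq]

end SemiSlant

/-- If the configuration `(J, K, D₁, D₂)` is semi-slant with angle
`θ ∈ [0, π/2)` and `Jhat : K → K` is defined by `JhatX = J(PX) + (1/cos θ) • φ(QX)`,
where `P, Q` are the orthogonal projections of `K` onto `D₁` and `D₂`, then
`Jhat(JhatX) = -X` for every `X ∈ K`, i.e. `Jhat` is a complex structure on `K`. -/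
theorem stmt_6 {V : Type*} [NormedAddCommGroup V] [InnerProductSpace ℝ V]
    [FiniteDimensional ℝ V]
    (J : V →ₗ[ℝ] V) (hJiso : ∀ v : V, ‖J v‖ = ‖v‖) (hJ2 : ∀ v : V, J (J v) = -v)
    (K : Submodule ℝ V)
    (φ : K → K)
    (hφ : ∀ X : K, φ X = Submodule.orthogonalProjectionOnto K (J (X : V)))
    (D₁ D₂ : Submodule ℝ V) (hD₁K : D₁ ≤ K) (hJD₁ : D₁.map J = D₁)
    (hD₂ : D₂ = D₁ᗮ ⊓ K)
    (θ : ℝ) (hθ : θ ∈ Set.Ico 0 (Real.pi / 2))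
    (hslant : ∀ X : V, X ∈ D₂ → X ≠ 0 →
      InnerProductGeometry.angle (J X) (Submodule.orthogonalProjectionOnto D₂ (J X) : V) = θ)
    (P Q : K → K)
    (hP : ∀ X : K, (P X : V) = Submodule.orthogonalProjectionOnto D₁ (X : V))
    (hQ : ∀ X : K, (Q X : V) = Submodule.orthogonalProjectionOnto D₂ (X : V))
    (Jhat : K → K)
    (hJhat : ∀ X : K, (Jhat X : V) = J (P X : V) + (1 / Real.cos θ) • (φ (Q X) : V)) :
    ∀ X : K, Jhat (Jhat X) = -X := by
  subst hD₂
  have hskew := LinearMap.inner_map_eq_neg_inner_map_of_isometry hJiso hJ2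
  have hcos : Real.cos θ ≠ 0 :=
    (Real.cos_pos_of_mem_Ioo ⟨by linarith [hθ.1, Real.pi_pos], hθ.2⟩).ne'
  have hJhat_eq : ∀ Y : K, (Jhat Y : V) = semiSlantStructure J D₁ K (Real.cos θ) Y := by
    intro Y
    have hQY : (Q Y : V) ∈ D₁ᗮ ⊓ K := by
      rw [hQ]
      exact coe_mem _
    have hJQ : J (Q Y) ∈ D₁ᗮ := LinearMap.map_mem_orthogonal hskew hJD₁.le hQY.1
    rw [hJhat, hP, hφ, ← starProjection_apply, ← starProjection_apply,
      ← starProjection_inf_orthogonal_eq_starProjection hD₁K hJQ, hQ, one_div]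
    rfl
  intro X
  ext
  rw [hJhat_eq, hJhat_eq]
  exact semiSlantStructure_semiSlantStructure hJiso hJ2 hD₁K hJD₁.le hcos hslant X.2
end

section
/- Suppose dim V is even and the configuration (J, K, D₁, D₂) is semi-slant with angle θ ∈ [0, π/2). Then the dimension of the orthogonal complement Kᗮ is even. -/
/-!
A skew-adjoint automorphism `f` of a real inner product space `W` satisfies
`det f = det fᵀ = det (-f) = (-1) ^ dim W * det f`, so `dim W` is even. Both `J` restricted to
the invariant subspace `D₁` and the compression `φ = proj_{D₂} ∘ J` of `J` to `D₂` are
skew-adjoint; the first is injective because `J² = -1`, the second because a slant angle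
`θ < π/2` forbids `φ X = 0` (that would make the angle `π/2`). Hence `K = D₁ ⊕ D₂` is
even-dimensional, and so is `Kᗮ` in the even-dimensional `V`.
-/

open Module
open scoped RealInnerProductSpace

section SkewOperator

variable {V : Type*} [NormedAddCommGroup V] [InnerProductSpace ℝ V]

theorem inner_map_left_eq_neg_of_isometry_of_sq_eq_neg (J : V →ₗ[ℝ] V)
    (hJiso : ∀ v, ‖J v‖ = ‖v‖) (hJ2 : ∀ v, J (J v) = -v) (x y : V) :
    ⟪J x, y⟫ = -⟪x, J y⟫ := by
  rw [← LinearIsometry.inner_map_map ⟨J, hJiso⟩ x (J y)]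
  simp [hJ2]

variable [FiniteDimensional ℝ V]

theorem LinearMap.det_adjoint (f : V →ₗ[ℝ] V) : (LinearMap.adjoint f).det = f.det := by
  let b := (stdOrthonormalBasis ℝ V).toBasis
  rw [← LinearMap.det_toMatrix b, ← LinearMap.det_toMatrix b,
    LinearMap.toMatrix_adjoint, Matrix.det_conjTranspose, star_trivial]

theorem even_finrank_of_skew_of_injective (f : V →ₗ[ℝ] V)
    (hskew : ∀ x y, ⟪f x, y⟫ = -⟪x, f y⟫) (hf : Function.Injective f) :
    Even (finrank ℝ V) := by
  have hadj : LinearMap.adjoint f = -f :=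
    ((LinearMap.eq_adjoint_iff (-f) f).mpr fun x y => by simp [hskew]).symm
  have hdet : f.det ≠ 0 := by
    rwa [Ne, LinearMap.det_eq_zero_iff_ker_ne_bot, not_not, LinearMap.ker_eq_bot]
  have hsign : (-1 : ℝ) ^ finrank ℝ V * f.det = f.det := by
    rw [← LinearMap.det_smul, neg_one_smul, ← hadj, LinearMap.det_adjoint]
  exact (neg_one_pow_eq_one_iff_even (by norm_num)).mp ((mul_eq_right₀ hdet).mp hsign)

theorem Submodule.even_finrank_of_orthogonalProjectionOnto_ne_zero (J : V →ₗ[ℝ] V)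
    (hJ : ∀ x y, ⟪J x, y⟫ = -⟪x, J y⟫) (U : Submodule ℝ V)
    (hU : ∀ X ∈ U, X ≠ 0 → U.orthogonalProjectionOnto (J X) ≠ 0) :
    Even (finrank ℝ U) := by
  refine even_finrank_of_skew_of_injective
    ((U.orthogonalProjectionOnto : V →ₗ[ℝ] U) ∘ₗ J ∘ₗ U.subtype) (fun x y => ?_) ?_
  · simp [hJ]
  · rw [← LinearMap.ker_eq_bot, Submodule.eq_bot_iff]
    intro X hX
    by_contra hX0
    exact hU X X.2 (by simpa using hX0) hX

end SkewOperator

/-- If `dim V` is even and the configuration `(J, K, D₁, D₂)` is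
semi-slant with angle `θ ∈ [0, π/2)`, then the dimension of `Kᗮ` is even. -/
theorem stmt_8 {V : Type*} [NormedAddCommGroup V] [InnerProductSpace ℝ V]
    [FiniteDimensional ℝ V]
    (hV : Even (Module.finrank ℝ V))
    (J : V →ₗ[ℝ] V) (hJiso : ∀ v : V, ‖J v‖ = ‖v‖) (hJ2 : ∀ v : V, J (J v) = -v)
    (K : Submodule ℝ V)
    (D₁ D₂ : Submodule ℝ V) (hD₁K : D₁ ≤ K) (hJD₁ : D₁.map J = D₁)
    (hD₂ : D₂ = D₁ᗮ ⊓ K)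
    (θ : ℝ) (hθ : θ ∈ Set.Ico 0 (Real.pi / 2))
    (hslant : ∀ X : V, X ∈ D₂ → X ≠ 0 →
      InnerProductGeometry.angle (J X) (D₂.orthogonalProjectionOnto (J X) : V) = θ) :
    Even (Module.finrank ℝ Kᗮ) := by
  have hJ := inner_map_left_eq_neg_of_isometry_of_sq_eq_neg J hJiso hJ2
  have hD₁even : Even (finrank ℝ D₁) := D₁.even_finrank_of_orthogonalProjectionOnto_ne_zero J hJ
    fun X hX hX0 => by
      have hJX : J X ∈ D₁ := hJD₁ ▸ Submodule.mem_map_of_mem hX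
      rw [D₁.orthogonalProjectionOnto_mem_subspace_eq_self ⟨J X, hJX⟩, Ne, Submodule.mk_eq_zero]
      intro h
      simpa [hJ2, hX0] using congrArg J h
  have hD₂even : Even (finrank ℝ D₂) := D₂.even_finrank_of_orthogonalProjectionOnto_ne_zero J hJ
    fun X hX hX0 hproj => by
      have hangle := hslant X hX hX0
      rw [hproj, ZeroMemClass.coe_zero, InnerProductGeometry.angle_zero_right] at hangle
      exact hθ.2.ne' hangle
  have hKeven : Even (finrank ℝ K) := by
    rw [← Submodule.finrank_add_inf_finrank_orthogonal hD₁K, ← hD₂]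
    exact hD₁even.add hD₂even
  rw [← K.finrank_add_finrank_orthogonal] at hV
  exact (Nat.even_add.mp hV).mp hKeven
end

section
/- Let D₁ be a subspace of K with J(D₁) = D₁ and D₂ the orthogonal complement of D₁ in K, and let ω(D₂) = {ωX : X ∈ D₂} ⊆ Kᗮ. Let μ be the orthogonal complement of ω(D₂) inside Kᗮ. Then μ is invariant under J, i.e. J(μ) = μ; consequently Kᗮ is the orthogonal direct sum of ω(D₂) and the J-invariant subspace μ. -/
/-!
For `m ∈ Kᗮ` one has `⟪ωX, m⟫ = ⟪JX, m⟫`, so `μ = Kᗮ ⊓ (J D₂)ᗮ`. Since `J D₁ = D₁ ⊆ K` and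
`K = D₁ ⊔ D₂`, this is `(K ⊔ J K)ᗮ`. The subspace `K ⊔ J K` is `J`-invariant because `J² = -1`,
and the orthogonal complement of a subspace invariant under a linear isometry is again invariant.
-/

namespace Submodule

variable {𝕜 E : Type*} [RCLike 𝕜] [NormedAddCommGroup E] [InnerProductSpace 𝕜 E]

theorem orthogonal_map_eq_of_map_eq [FiniteDimensional 𝕜 E] (f : E →ₗᵢ[𝕜] E) {S : Submodule 𝕜 E}
    (hS : S.map f.toLinearMap = S) : Sᗮ.map f.toLinearMap = Sᗮ := by
  have hrange : f.range = ⊤ :=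
    LinearMap.range_eq_top.2 (LinearMap.surjective_of_injective f.injective)
  rw [map_orthogonal, hS, hrange, inf_top_eq]

theorem orthogonal_map_starProjection_inf (U D : Submodule 𝕜 E) [U.HasOrthogonalProjection] :
    (D.map (U.starProjection : E →ₗ[𝕜] E))ᗮ ⊓ U = Dᗮ ⊓ U := by
  ext m
  simp only [mem_inf, mem_orthogonal, mem_map, forall_exists_index, and_imp,
    forall_apply_eq_imp_iff₂, ContinuousLinearMap.coe_coe]
  refine and_congr_left fun hm => forall₂_congr fun d _ => ?_
  rw [inner_starProjection_left_eq_right, starProjection_eq_self_iff.2 hm]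

theorem orthogonal_inf_orthogonal_map_eq {K D₁ D₂ : Submodule 𝕜 E} (J : E →ₗ[𝕜] E)
    (hJD₁ : D₁.map J ≤ K) (hK : D₁ ⊔ D₂ = K) :
    Kᗮ ⊓ (D₂.map J)ᗮ = (K ⊔ K.map J)ᗮ := by
  have hKJ : K.map J = D₁.map J ⊔ D₂.map J := by rw [← hK, map_sup]
  rw [← inf_orthogonal, hKJ, ← inf_orthogonal, ← inf_assoc, inf_eq_left.2 (orthogonal_le hJD₁)]

theorem map_sup_map_eq_self_of_sq_eq_neg {R M : Type*} [CommRing R] [AddCommGroup M]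
    [Module R M] (J : M →ₗ[R] M) (hJ2 : ∀ v, J (J v) = -v) (K : Submodule R M) :
    (K ⊔ K.map J).map J = K ⊔ K.map J := by
  have hJJ : J ∘ₗ J = -LinearMap.id := LinearMap.ext hJ2
  rw [map_sup, ← map_comp, hJJ, Submodule.map_neg, map_id, sup_comm]

end Submodule

theorem stmt_9_general {V : Type*} [NormedAddCommGroup V] [InnerProductSpace ℝ V]
    [FiniteDimensional ℝ V]
    (J : V →ₗ[ℝ] V) (hJiso : ∀ v : V, ‖J v‖ = ‖v‖) (hJ2 : ∀ v : V, J (J v) = -v)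
    (K : Submodule ℝ V)
    (ω : K → Kᗮ)
    (hω : ∀ X : K, ω X = Submodule.orthogonalProjection Kᗮ (J (X : V)))
    (D₁ D₂ : Submodule ℝ V) (hD₁K : D₁ ≤ K) (hJD₁ : D₁.map J = D₁)
    (hD₂ : D₂ = D₁ᗮ ⊓ K)
    (W : Submodule ℝ V)
    (hW : ∀ v : V, v ∈ W ↔ ∃ X : K, (X : V) ∈ D₂ ∧ (ω X : V) = v)
    (μ : Submodule ℝ V) (hμ : μ = Wᗮ ⊓ Kᗮ) :
    μ.map J = μ ∧
    (∀ w ∈ W, ∀ m ∈ μ, inner ℝ w m = (0 : ℝ)) ∧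
    W ⊔ μ = Kᗮ := by
  have hWeq : W = (D₂.map J).map (Kᗮ.starProjection : V →ₗ[ℝ] V) := by
    ext v
    rw [hW]
    constructor
    · rintro ⟨X, hX, rfl⟩
      exact ⟨J X, ⟨X, hX, rfl⟩, by rw [hω]; rfl⟩
    · rintro ⟨_, ⟨X, hX, rfl⟩, rfl⟩
      exact ⟨⟨X, (hD₂ ▸ hX).2⟩, hX, by rw [hω]; rfl⟩
  have hK : D₁ ⊔ D₂ = K := hD₂ ▸ Submodule.sup_orthogonal_inf_of_hasOrthogonalProjection hD₁K
  have hμeq : μ = (K ⊔ K.map J)ᗮ := by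
    rw [hμ, hWeq, Submodule.orthogonal_map_starProjection_inf, inf_comm,
      Submodule.orthogonal_inf_orthogonal_map_eq J (hJD₁.le.trans hD₁K) hK]
  refine ⟨?_, fun w hw m hm => ?_, ?_⟩
  · rw [hμeq]
    exact Submodule.orthogonal_map_eq_of_map_eq { toLinearMap := J, norm_map' := hJiso }
      (Submodule.map_sup_map_eq_self_of_sq_eq_neg J hJ2 K)
  · exact Submodule.inner_right_of_mem_orthogonal hw (hμ ▸ hm).1
  · have hWK : W ≤ Kᗮ := fun w hw => by
      obtain ⟨X, -, rfl⟩ := (hW w).1 hw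
      exact (ω X).2
    rw [hμ]
    exact Submodule.sup_orthogonal_inf_of_hasOrthogonalProjection hWK

/-- With `W = ω(D₂) = {ωX : X ∈ D₂} ⊆ Kᗮ` and `μ` the orthogonal
complement of `W` inside `Kᗮ`, the subspace `μ` is invariant under `J`, i.e.
`J(μ) = μ`; consequently `Kᗮ` is the orthogonal direct sum of `ω(D₂)` and the
`J`-invariant subspace `μ`. -/
theorem stmt_9 {V : Type*} [NormedAddCommGroup V] [InnerProductSpace ℝ V]
    [FiniteDimensional ℝ V]
    (J : V →ₗ[ℝ] V) (hJiso : ∀ v : V, ‖J v‖ = ‖v‖) (hJ2 : ∀ v : V, J (J v) = -v)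
    (K : Submodule ℝ V)
    (φ : K → K) (ω : K → Kᗮ)
    (hφ : ∀ X : K, φ X = Submodule.orthogonalProjection K (J (X : V)))
    (hω : ∀ X : K, ω X = Submodule.orthogonalProjection Kᗮ (J (X : V)))
    (D₁ D₂ : Submodule ℝ V) (hD₁K : D₁ ≤ K) (hJD₁ : D₁.map J = D₁)
    (hD₂ : D₂ = D₁ᗮ ⊓ K)
    (W : Submodule ℝ V)
    (hW : ∀ v : V, v ∈ W ↔ ∃ X : K, (X : V) ∈ D₂ ∧ (ω X : V) = v)
    (μ : Submodule ℝ V) (hμ : μ = Wᗮ ⊓ Kᗮ) :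
    μ.map J = μ ∧
    (∀ w ∈ W, ∀ m ∈ μ, inner ℝ w m = (0 : ℝ)) ∧
    W ⊔ μ = Kᗮ :=
  stmt_9_general J hJiso hJ2 K ω hω D₁ D₂ hD₁K hJD₁ hD₂ W hW μ hμ
end

section
/- Suppose the configuration (J, K, D₁, D₂) is semi-slant with angle θ. Then B(ωX) = −(sin θ)² · X for every X ∈ D₂. -/
/-!
Write `φ = P_K ∘ J`, `ω = P_Kᗮ ∘ J` and `B = P_K ∘ J`, with `P` the orthogonal projections
(`Submodule.starProjection`). On `K`, `φ` is skew-adjoint because `J` is. Since `D₁` is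
`J`-invariant, `φ` maps `D₂` into itself, so `φ X` is also the projection of `J X` onto `D₂`
and the slant condition reads `‖φ X‖ = cos θ ‖X‖` on `D₂`. Polarizing,
`⟪φ² X, Y⟫ = -⟪φ X, φ Y⟫ = -cos² θ ⟪X, Y⟫` for `X, Y ∈ D₂`, so `φ² = -cos² θ` on `D₂`.
Projecting `J (J X) = -X` onto `K` gives `φ² + B ω = -id`, hence `B ω = -sin² θ` on `D₂`.
-/

open RealInnerProductSpace InnerProductGeometry

section Isometry

variable {V : Type*} [NormedAddCommGroup V] [InnerProductSpace ℝ V] {J : V →ₗ[ℝ] V}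

theorem inner_map_map_of_norm_map (hJiso : ∀ v, ‖J v‖ = ‖v‖) (u v : V) :
    ⟪J u, J v⟫ = ⟪u, v⟫ :=
  (LinearIsometry.mk J hJiso).inner_map_map u v

theorem inner_map_left_eq_neg_inner_map_right_s10 (hJiso : ∀ v, ‖J v‖ = ‖v‖)
    (hJ2 : ∀ v, J (J v) = -v) (u v : V) : ⟪J u, v⟫ = -⟪u, J v⟫ := by
  rw [← inner_map_map_of_norm_map hJiso u (J v), hJ2, inner_neg_right, neg_neg]

theorem map_mem_orthogonal_of_le_map (hJiso : ∀ v, ‖J v‖ = ‖v‖) {D : Submodule ℝ V}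
    (hD : D ≤ D.map J) {x : V} (hx : x ∈ Dᗮ) : J x ∈ Dᗮ := by
  intro y hy
  obtain ⟨z, hz, rfl⟩ := hD hy
  rw [inner_map_map_of_norm_map hJiso]
  exact hx z hz

end Isometry

section Projection

variable {V : Type*} [NormedAddCommGroup V] [InnerProductSpace ℝ V]

theorem inner_starProjection_right_eq_norm_sq (K : Submodule ℝ V) [K.HasOrthogonalProjection]
    (v : V) : ⟪v, K.starProjection v⟫ = ‖K.starProjection v‖ ^ 2 := by
  rw [← K.starProjection_eq_self_iff.mpr (K.starProjection_apply_mem v),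
    ← K.inner_starProjection_left_eq_right, K.starProjection_eq_self_iff.mpr
    (K.starProjection_apply_mem v), real_inner_self_eq_norm_sq]

-- When the projection vanishes both sides are `0`, since `angle v 0 = π / 2`.
theorem norm_starProjection_eq_cos_angle_mul_norm (K : Submodule ℝ V)
    [K.HasOrthogonalProjection] (v : V) :
    ‖K.starProjection v‖ = Real.cos (angle v (K.starProjection v)) * ‖v‖ := by
  rcases eq_or_ne (K.starProjection v) 0 with h | h
  · simp [h]
  have key := cos_angle_mul_norm_mul_norm v (K.starProjection v)
  rw [inner_starProjection_right_eq_norm_sq] at key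
  have hpos : 0 < ‖K.starProjection v‖ := norm_pos_iff.mpr h
  nlinarith

theorem starProjection_mem_orthogonal_of_le {D K : Submodule ℝ V} [K.HasOrthogonalProjection]
    (hDK : D ≤ K) {v : V} (hv : v ∈ Dᗮ) : K.starProjection v ∈ Dᗮ := by
  intro y hy
  rw [← K.inner_starProjection_left_eq_right, K.starProjection_eq_self_iff.mpr (hDK hy)]
  exact hv y hy

theorem starProjection_eq_of_le_of_mem {D K : Submodule ℝ V} [D.HasOrthogonalProjection]
    [K.HasOrthogonalProjection] (hDK : D ≤ K) {v : V} (hv : K.starProjection v ∈ D) :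
    D.starProjection v = K.starProjection v := by
  rw [← D.starProjection_eq_self_iff.mpr hv, D.starProjection_apply, D.starProjection_apply,
    Submodule.orthogonalProjectionOnto_starProjection_of_le hDK]

end Projection

theorem inner_map_map_eq_sq_mul_inner_of_norm_map {V W : Type*} [NormedAddCommGroup V]
    [InnerProductSpace ℝ V] [NormedAddCommGroup W] [InnerProductSpace ℝ W]
    {D : Submodule ℝ V} (T : V →ₗ[ℝ] W) {c : ℝ} (hT : ∀ x ∈ D, ‖T x‖ = c * ‖x‖)
    {x y : V} (hx : x ∈ D) (hy : y ∈ D) : ⟪T x, T y⟫ = c ^ 2 * ⟪x, y⟫ := by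
  have hsum := norm_add_sq_real (T x) (T y)
  rw [← map_add, hT _ (D.add_mem hx hy), hT x hx, hT y hy] at hsum
  linear_combination (c ^ 2 * norm_add_sq_real x y - hsum) / 2

section SemiSlant

variable {V : Type*} [NormedAddCommGroup V] [InnerProductSpace ℝ V] {J : V →ₗ[ℝ] V}
  {K : Submodule ℝ V} [K.HasOrthogonalProjection]

theorem inner_starProjection_map_eq_neg_inner (hJiso : ∀ v, ‖J v‖ = ‖v‖)
    (hJ2 : ∀ v, J (J v) = -v) {x y : V} (hx : x ∈ K) (hy : y ∈ K) :
    ⟪K.starProjection (J x), y⟫ = -⟪x, K.starProjection (J y)⟫ := by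
  rw [K.inner_starProjection_left_eq_right, ← K.inner_starProjection_left_eq_right x,
    K.starProjection_eq_self_iff.mpr hx, K.starProjection_eq_self_iff.mpr hy,
    inner_map_left_eq_neg_inner_map_right_s10 hJiso hJ2]

theorem starProjection_map_add_starProjection_orthogonal_map (hJ2 : ∀ v, J (J v) = -v)
    {x : V} (hx : x ∈ K) :
    K.starProjection (J (K.starProjection (J x))) + K.starProjection (J (Kᗮ.starProjection (J x)))
      = -x := by
  rw [← map_add, ← map_add, K.starProjection_add_starProjection_orthogonal, hJ2, map_neg,
    K.starProjection_eq_self_iff.mpr hx]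

variable {D : Submodule ℝ V} [D.HasOrthogonalProjection] {θ : ℝ}

theorem norm_starProjection_map_eq_cos_mul_norm (hJiso : ∀ v, ‖J v‖ = ‖v‖) (hDK : D ≤ K)
    (hD : ∀ x ∈ D, K.starProjection (J x) ∈ D)
    (hslant : ∀ x ∈ D, x ≠ 0 → angle (J x) (D.starProjection (J x)) = θ)
    {x : V} (hx : x ∈ D) : ‖K.starProjection (J x)‖ = Real.cos θ * ‖x‖ := by
  rcases eq_or_ne x 0 with rfl | hx0
  · simp
  rw [← hslant x hx hx0, starProjection_eq_of_le_of_mem hDK (hD x hx), ← hJiso x,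
    norm_starProjection_eq_cos_angle_mul_norm]

theorem starProjection_map_starProjection_map_eq (hJiso : ∀ v, ‖J v‖ = ‖v‖)
    (hJ2 : ∀ v, J (J v) = -v) (hDK : D ≤ K) (hD : ∀ x ∈ D, K.starProjection (J x) ∈ D)
    (hslant : ∀ x ∈ D, x ≠ 0 → angle (J x) (D.starProjection (J x)) = θ)
    {x : V} (hx : x ∈ D) :
    K.starProjection (J (K.starProjection (J x))) = -(Real.cos θ ^ 2) • x := by
  set w := K.starProjection (J (K.starProjection (J x))) + Real.cos θ ^ 2 • x
  have hw : w ∈ D := D.add_mem (hD _ (hD x hx)) (D.smul_mem _ hx)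
  have hw_orth : ∀ y ∈ D, ⟪w, y⟫ = 0 := by
    intro y hy
    have hpol := inner_map_map_eq_sq_mul_inner_of_norm_map
      ((K.starProjection : V →ₗ[ℝ] V) ∘ₗ J)
      (fun z hz ↦ norm_starProjection_map_eq_cos_mul_norm hJiso hDK hD hslant hz) hx hy
    simp only [LinearMap.comp_apply, ContinuousLinearMap.coe_coe] at hpol
    rw [inner_add_left, real_inner_smul_left,
      inner_starProjection_map_eq_neg_inner hJiso hJ2 (hDK (hD x hx)) (hDK hy), hpol]
    ring
  rw [neg_smul]
  exact eq_neg_of_add_eq_zero_left (inner_self_eq_zero.mp (hw_orth w hw))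

theorem starProjection_map_starProjection_orthogonal_map_eq (hJiso : ∀ v, ‖J v‖ = ‖v‖)
    (hJ2 : ∀ v, J (J v) = -v) (hDK : D ≤ K) (hD : ∀ x ∈ D, K.starProjection (J x) ∈ D)
    (hslant : ∀ x ∈ D, x ≠ 0 → angle (J x) (D.starProjection (J x)) = θ)
    {x : V} (hx : x ∈ D) :
    K.starProjection (J (Kᗮ.starProjection (J x))) = -(Real.sin θ ^ 2) • x := by
  have hsum := starProjection_map_add_starProjection_orthogonal_map hJ2 (hDK hx)
  rw [starProjection_map_starProjection_map_eq hJiso hJ2 hDK hD hslant hx] at hsum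
  rw [Real.sin_sq, eq_sub_of_add_eq' hsum]
  module

end SemiSlant

theorem starProjection_map_mem_orthogonal_inf {V : Type*} [NormedAddCommGroup V]
    [InnerProductSpace ℝ V] {J : V →ₗ[ℝ] V} (hJiso : ∀ v, ‖J v‖ = ‖v‖)
    {K D : Submodule ℝ V} [K.HasOrthogonalProjection] (hDK : D ≤ K) (hD : D ≤ D.map J)
    {x : V} (hx : x ∈ Dᗮ) : K.starProjection (J x) ∈ Dᗮ ⊓ K :=
  ⟨starProjection_mem_orthogonal_of_le hDK (map_mem_orthogonal_of_le_map hJiso hD hx),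
    K.starProjection_apply_mem _⟩

theorem stmt_10_general {V : Type*} [NormedAddCommGroup V] [InnerProductSpace ℝ V]
    [FiniteDimensional ℝ V]
    (J : V →ₗ[ℝ] V) (hJiso : ∀ v : V, ‖J v‖ = ‖v‖) (hJ2 : ∀ v : V, J (J v) = -v)
    (K : Submodule ℝ V)
    (ω : K → Kᗮ) (B : Kᗮ → K)
    (hω : ∀ X : K, ω X = Submodule.orthogonalProjectionOnto Kᗮ (J (X : V)))
    (hB : ∀ Z : Kᗮ, B Z = Submodule.orthogonalProjectionOnto K (J (Z : V)))
    (D₁ D₂ : Submodule ℝ V) (hD₁K : D₁ ≤ K) (hJD₁ : D₁.map J = D₁)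
    (hD₂ : D₂ = D₁ᗮ ⊓ K)
    (θ : ℝ)
    (hslant : ∀ X : V, X ∈ D₂ → X ≠ 0 →
      InnerProductGeometry.angle (J X) (Submodule.orthogonalProjectionOnto D₂ (J X) : V) = θ) :
    ∀ X : K, (X : V) ∈ D₂ → B (ω X) = (-(Real.sin θ ^ 2)) • X := by
  subst hD₂
  intro X hX
  have hinv : ∀ x ∈ D₁ᗮ ⊓ K, K.starProjection (J x) ∈ D₁ᗮ ⊓ K := fun x hx ↦
    starProjection_map_mem_orthogonal_inf hJiso hD₁K hJD₁.ge hx.1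
  apply Subtype.ext
  rw [hB, hω]
  simpa using starProjection_map_starProjection_orthogonal_map_eq hJiso hJ2 inf_le_right hinv
    hslant hX

/-- If the configuration `(J, K, D₁, D₂)` is semi-slant with angle `θ`,
then `B(ωX) = -(sin θ)² • X` for every `X ∈ D₂`. -/
theorem stmt_10 {V : Type*} [NormedAddCommGroup V] [InnerProductSpace ℝ V]
    [FiniteDimensional ℝ V]
    (J : V →ₗ[ℝ] V) (hJiso : ∀ v : V, ‖J v‖ = ‖v‖) (hJ2 : ∀ v : V, J (J v) = -v)
    (K : Submodule ℝ V)
    (φ : K → K) (ω : K → Kᗮ) (B : Kᗮ → K)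
    (hφ : ∀ X : K, φ X = Submodule.orthogonalProjectionOnto K (J (X : V)))
    (hω : ∀ X : K, ω X = Submodule.orthogonalProjectionOnto Kᗮ (J (X : V)))
    (hB : ∀ Z : Kᗮ, B Z = Submodule.orthogonalProjectionOnto K (J (Z : V)))
    (D₁ D₂ : Submodule ℝ V) (hD₁K : D₁ ≤ K) (hJD₁ : D₁.map J = D₁)
    (hD₂ : D₂ = D₁ᗮ ⊓ K)
    (θ : ℝ)
    (hslant : ∀ X : V, X ∈ D₂ → X ≠ 0 →
      InnerProductGeometry.angle (J X) (Submodule.orthogonalProjectionOnto D₂ (J X) : V) = θ) :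
    ∀ X : K, (X : V) ∈ D₂ → B (ω X) = (-(Real.sin θ ^ 2)) • X :=
  stmt_10_general J hJiso hJ2 K ω B hω hB D₁ D₂ hD₁K hJD₁ hD₂ θ hslant
end

section
/- Fix real constants α, β and let F : ℝ⁸ → ℝ⁴ be the linear map F(x₁,…,x₈) = (x₁, x₂, x₃ cos α − x₅ sin α, x₄ sin β − x₆ cos β). Then: (i) F is surjective and ‖F(v)‖ = ‖v‖ for every v in the orthogonal complement of ker F (so F is a Riemannian submersion of Euclidean spaces); (ii) ker F is the orthogonal direct sum of D₁ = span{e₇, e₈} and D₂ = span{sin α · e₃ + cos α · e₅, cos β · e₄ + sin β · e₆}; (iii) J(D₁) = D₁; (iv) for every nonzero X ∈ D₂, the cosine of the angle between JX and the orthogonal projection of JX onto D₂ equals |sin(α + β)|. Hence F is a semi-slant submersion with semi-slant angle θ determined by cos θ = |sin(α + β)|. -/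
/-!
The four rows of `F` are orthonormal, so `(ker F)ᗮ` is their span and `F (∑ cᵢ rᵢ) = c`: this
makes `F` a surjective isometry on `(ker F)ᗮ`. The unit vectors `u, w` spanning `D₂` are
orthogonal and `J` is skew-adjoint, so the compression of `J` to `D₂` is `⟪J u, w⟫` times the
rotation `u ↦ w, w ↦ -u`, with `⟪J u, w⟫ = sin (α + β)`. Since `⟪x, P x⟫ = ‖P x‖²` for an
orthogonal projection `P`, the cosine of the angle between `J X` and `P (J X)` is
`‖P (J X)‖ / ‖J X‖ = |sin (α + β)|`.
-/

open Real InnerProductGeometry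
open scoped RealInnerProductSpace

theorem Submodule.map_span_pair_self_apply {R M : Type*} [Ring R] [AddCommGroup M] [Module R M]
    {J : M →ₗ[R] M} {x : M} (hx : J (J x) = -x) :
    (span R {x, J x}).map J = span R {x, J x} := by
  rw [map_span, Set.image_pair, hx, Set.pair_comm, span_insert, span_insert,
    ← Set.neg_singleton, span_neg]

section InnerProductSpace

variable {E : Type*} [NormedAddCommGroup E] [InnerProductSpace ℝ E]

theorem Submodule.cos_angle_starProjection (K : Submodule ℝ E) [K.HasOrthogonalProjection]
    (x : E) : cos (angle x (K.starProjection x)) = ‖K.starProjection x‖ / ‖x‖ := by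
  rcases eq_or_ne (K.starProjection x) 0 with h | h
  · simp [h]
  have hinner : ⟪x, K.starProjection x⟫ = ‖K.starProjection x‖ ^ 2 := by
    rw [real_inner_comm]
    simpa using K.re_inner_starProjection_eq_normSq x
  rw [cos_angle, hinner]
  field_simp

theorem norm_smul_add_smul_sq_of_orthonormal {u w : E} (hu : ‖u‖ = 1) (hw : ‖w‖ = 1)
    (huw : ⟪u, w⟫ = 0) (a b : ℝ) : ‖a • u + b • w‖ ^ 2 = a ^ 2 + b ^ 2 := by
  rw [norm_add_sq_real, real_inner_smul_left, real_inner_smul_right, huw, norm_smul, norm_smul,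
    hu, hw, mul_one, mul_one, Real.norm_eq_abs, Real.norm_eq_abs, sq_abs, sq_abs]
  ring

theorem norm_starProjection_span_pair_apply_of_skew [FiniteDimensional ℝ E] {J : E →ₗ[ℝ] E}
    (hJ : ∀ x y, ⟪J x, y⟫ = -⟪x, J y⟫) {u w : E} (hu : ‖u‖ = 1) (hw : ‖w‖ = 1)
    (huw : ⟪u, w⟫ = 0) {X : E} (hX : X ∈ Submodule.span ℝ {u, w}) :
    ‖(Submodule.span ℝ {u, w}).starProjection (J X)‖ = |⟪J u, w⟫| * ‖X‖ := by
  obtain ⟨a, b, rfl⟩ := Submodule.mem_span_pair.1 hX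
  set s := ⟪J u, w⟫
  have hJu : ⟪J u, u⟫ = 0 := by linarith [hJ u u, real_inner_comm u (J u)]
  have hJw : ⟪J w, w⟫ = 0 := by linarith [hJ w w, real_inner_comm w (J w)]
  have hJwu : ⟪J w, u⟫ = -s := by rw [hJ, real_inner_comm]
  have hproj : (Submodule.span ℝ {u, w}).starProjection (J (a • u + b • w))
      = (-(b * s)) • u + (a * s) • w := by
    refine Submodule.eq_starProjection_of_mem_of_inner_eq_zero
      (Submodule.mem_span_pair.2 ⟨_, _, rfl⟩) fun z hz => ?_
    obtain ⟨m, n, rfl⟩ := Submodule.mem_span_pair.1 hz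
    simp only [map_add, map_smul, inner_add_left, inner_add_right, inner_sub_left,
      real_inner_smul_left, real_inner_smul_right, real_inner_self_eq_norm_sq, hu, hw, huw,
      real_inner_comm u w, hJu, hJw, hJwu]
    ring
  rw [hproj, ← sq_eq_sq₀ (norm_nonneg _) (by positivity), mul_pow, sq_abs,
    norm_smul_add_smul_sq_of_orthonormal hu hw huw,
    norm_smul_add_smul_sq_of_orthonormal hu hw huw]
  ring

theorem cos_angle_starProjection_span_pair_apply_of_skew [FiniteDimensional ℝ E]
    {J : E →ₗ[ℝ] E} (hJ : ∀ x y, ⟪J x, y⟫ = -⟪x, J y⟫) (hJn : ∀ x, ‖J x‖ = ‖x‖) {u w : E}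
    (hu : ‖u‖ = 1) (hw : ‖w‖ = 1) (huw : ⟪u, w⟫ = 0) {X : E}
    (hX : X ∈ Submodule.span ℝ {u, w}) (hX0 : X ≠ 0) :
    cos (angle (J X) ((Submodule.span ℝ {u, w}).starProjection (J X))) = |⟪J u, w⟫| := by
  rw [Submodule.cos_angle_starProjection,
    norm_starProjection_span_pair_apply_of_skew hJ hu hw huw hX, hJn]
  field_simp [norm_ne_zero_iff.2 hX0]

namespace LinearMap

variable {ι : Type*} [Fintype ι] {F : E →ₗ[ℝ] EuclideanSpace ℝ ι} {r : ι → E}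

theorem apply_sum_smul_of_orthonormal_rows (hr : Orthonormal ℝ r) (hF : ∀ x i, F x i = ⟪r i, x⟫)
    (c : EuclideanSpace ℝ ι) : F (∑ i, c i • r i) = c := by
  ext i
  rw [hF, hr.inner_right_fintype]

theorem surjective_of_orthonormal_rows (hr : Orthonormal ℝ r) (hF : ∀ x i, F x i = ⟪r i, x⟫) :
    Function.Surjective F :=
  fun c => ⟨_, apply_sum_smul_of_orthonormal_rows hr hF c⟩

theorem norm_apply_eq_of_mem_orthogonal_ker (hr : Orthonormal ℝ r)
    (hF : ∀ x i, F x i = ⟪r i, x⟫) {v : E} (hv : v ∈ (ker F)ᗮ) : ‖F v‖ = ‖v‖ := by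
  have := FiniteDimensional.span_of_finite ℝ (Set.finite_range r)
  have hker : (Submodule.span ℝ (Set.range r))ᗮ ≤ ker F := fun x hx => by
    ext i
    rw [hF]
    exact (Submodule.mem_orthogonal _ x).1 hx _ (Submodule.subset_span ⟨i, rfl⟩)
  obtain ⟨c, rfl⟩ := (Submodule.mem_span_range_iff_exists_fun ℝ).1
    ((Submodule.orthogonal_orthogonal (Submodule.span ℝ (Set.range r))) ▸
      Submodule.orthogonal_le hker hv)
  rw [apply_sum_smul_of_orthonormal_rows hr hF (WithLp.toLp 2 c),
    ← sq_eq_sq₀ (norm_nonneg _) (norm_nonneg _), ← real_inner_self_eq_norm_sq,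
    ← real_inner_self_eq_norm_sq, hr.inner_sum, EuclideanSpace.inner_eq_star_dotProduct]
  simp [dotProduct]

end LinearMap

end InnerProductSpace

namespace SemiSlantExample

local notation "ℝ⁸" => EuclideanSpace ℝ (Fin 8)

def IsStandardComplexStructure (J : ℝ⁸ →ₗ[ℝ] ℝ⁸) : Prop :=
  ∀ x k, J x k = if k.val % 2 = 0 then -(x (k + 1)) else x (k - 1)

noncomputable def slantVec₁ (α : ℝ) : ℝ⁸ :=
  sin α • EuclideanSpace.single 2 1 + cos α • EuclideanSpace.single 4 1

noncomputable def slantVec₂ (β : ℝ) : ℝ⁸ :=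
  cos β • EuclideanSpace.single 3 1 + sin β • EuclideanSpace.single 5 1

noncomputable def rows (α β : ℝ) : Fin 4 → ℝ⁸ :=
  ![EuclideanSpace.single 0 1, EuclideanSpace.single 1 1,
    cos α • EuclideanSpace.single 2 1 - sin α • EuclideanSpace.single 4 1,
    sin β • EuclideanSpace.single 3 1 - cos β • EuclideanSpace.single 5 1]

namespace IsStandardComplexStructure

variable {J : ℝ⁸ →ₗ[ℝ] ℝ⁸}

theorem inner_apply_left (hJ : IsStandardComplexStructure J) (x y : ℝ⁸) :
    ⟪J x, y⟫ = -⟪x, J y⟫ := by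
  simp [PiLp.inner_apply, Fin.sum_univ_eight, hJ x, hJ y]
  ring

theorem norm_apply (hJ : IsStandardComplexStructure J) (x : ℝ⁸) : ‖J x‖ = ‖x‖ := by
  simp [EuclideanSpace.norm_eq, Fin.sum_univ_eight, hJ x]
  ring_nf

theorem apply_single_six (hJ : IsStandardComplexStructure J) :
    J (EuclideanSpace.single 6 1) = EuclideanSpace.single 7 1 := by
  ext k; rw [hJ]; fin_cases k <;> simp

theorem apply_single_seven (hJ : IsStandardComplexStructure J) :
    J (EuclideanSpace.single 7 1) = -EuclideanSpace.single 6 1 := by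
  ext k; rw [hJ]; fin_cases k <;> simp

theorem inner_apply_slantVec₁_slantVec₂ (hJ : IsStandardComplexStructure J) (α β : ℝ) :
    ⟪J (slantVec₁ α), slantVec₂ β⟫ = sin (α + β) := by
  simp only [PiLp.inner_apply, Fin.sum_univ_eight, hJ (slantVec₁ α)]
  simp [slantVec₁, slantVec₂, sin_add]
  ring

end IsStandardComplexStructure

theorem norm_slantVec₁ (α : ℝ) : ‖slantVec₁ α‖ = 1 := by
  simp [EuclideanSpace.norm_eq, Fin.sum_univ_eight, slantVec₁]

theorem norm_slantVec₂ (β : ℝ) : ‖slantVec₂ β‖ = 1 := by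
  simp [EuclideanSpace.norm_eq, Fin.sum_univ_eight, slantVec₂]

theorem inner_slantVec₁_slantVec₂ (α β : ℝ) : ⟪slantVec₁ α, slantVec₂ β⟫ = 0 := by
  simp [PiLp.inner_apply, Fin.sum_univ_eight, slantVec₁, slantVec₂]

theorem isOrtho_span_single_span_slantVec (α β : ℝ) :
    Submodule.span ℝ {EuclideanSpace.single 6 1, EuclideanSpace.single 7 1} ⟂
      Submodule.span ℝ {slantVec₁ α, slantVec₂ β} := by
  rw [Submodule.isOrtho_span]
  rintro _ (rfl | rfl) _ (rfl | rfl) <;>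
    simp [slantVec₁, slantVec₂, inner_add_right, inner_smul_right, EuclideanSpace.inner_single_left]

theorem orthonormal_rows (α β : ℝ) : Orthonormal ℝ (rows α β) := by
  rw [orthonormal_iff_ite]
  intro i j
  fin_cases i <;> fin_cases j <;>
    simp [-inner_self_eq_norm_sq_to_K, PiLp.inner_apply, Fin.sum_univ_eight, rows, ← sq]

section Submersion

variable {α β : ℝ} {F : ℝ⁸ →ₗ[ℝ] EuclideanSpace ℝ (Fin 4)}

theorem apply_eq_of_coords (hF : ∀ x : ℝ⁸, F x 0 = x 0 ∧ F x 1 = x 1 ∧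
      F x 2 = x 2 * cos α - x 4 * sin α ∧ F x 3 = x 3 * sin β - x 5 * cos β) (x : ℝ⁸) :
    F x = !₂[x 0, x 1, x 2 * cos α - x 4 * sin α, x 3 * sin β - x 5 * cos β] := by
  obtain ⟨h0, h1, h2, h3⟩ := hF x
  ext i; fin_cases i <;> simp [h0, h1, h2, h3]

theorem apply_eq_inner_rows
    (hF : ∀ x : ℝ⁸, F x = !₂[x 0, x 1, x 2 * cos α - x 4 * sin α, x 3 * sin β - x 5 * cos β])
    (x : ℝ⁸) (i : Fin 4) : F x i = ⟪rows α β i, x⟫ := by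
  rw [hF]
  fin_cases i <;> simp [PiLp.inner_apply, Fin.sum_univ_eight, rows] <;> ring

theorem ker_eq_sup
    (hF : ∀ x : ℝ⁸, F x = !₂[x 0, x 1, x 2 * cos α - x 4 * sin α, x 3 * sin β - x 5 * cos β]) :
    LinearMap.ker F = Submodule.span ℝ {EuclideanSpace.single 6 1, EuclideanSpace.single 7 1}
      ⊔ Submodule.span ℝ {slantVec₁ α, slantVec₂ β} := by
  refine le_antisymm (fun x hx => ?_) (sup_le ?_ ?_)
  · rw [LinearMap.mem_ker, hF] at hx
    obtain ⟨h0, h1, h2, h3⟩ : x 0 = 0 ∧ x 1 = 0 ∧ x 2 * cos α - x 4 * sin α = 0 ∧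
        x 3 * sin β - x 5 * cos β = 0 := by
      simpa using hx
    refine Submodule.mem_sup.2 ⟨x 6 • EuclideanSpace.single 6 1 + x 7 • EuclideanSpace.single 7 1,
      Submodule.mem_span_pair.2 ⟨_, _, rfl⟩,
      (x 2 * sin α + x 4 * cos α) • slantVec₁ α + (x 3 * cos β + x 5 * sin β) • slantVec₂ β,
      Submodule.mem_span_pair.2 ⟨_, _, rfl⟩, ?_⟩
    ext k
    fin_cases k <;> simp [slantVec₁, slantVec₂, h0, h1]
    · linear_combination x 2 * sin_sq_add_cos_sq α - cos α * h2
    · linear_combination x 3 * sin_sq_add_cos_sq β - sin β * h3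
    · linear_combination x 4 * sin_sq_add_cos_sq α + sin α * h2
    · linear_combination x 5 * sin_sq_add_cos_sq β + cos β * h3
  · rw [Submodule.span_le]
    rintro _ (rfl | rfl) <;> simp [hF]
  · rw [Submodule.span_le]
    rintro _ (rfl | rfl) <;> simp [hF, slantVec₁, slantVec₂, mul_comm]

end Submersion

end SemiSlantExample

open SemiSlantExample in
/-- Example 3.9: For constants `α, β`, the map
`F : ℝ⁸ → ℝ⁴, F(x) = (x₁, x₂, x₃ cos α − x₅ sin α, x₄ sin β − x₆ cos β)` is a
Riemannian submersion which is semi-slant with semi-slant angle `θ` determined by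
`cos θ = |sin (α+β)|`, where `J` is the standard complex structure (written here in
0-indexed coordinates), `D₁ = span{e₇, e₈}` and
`D₂ = span{sin α · e₃ + cos α · e₅, cos β · e₄ + sin β · e₆}` (1-indexed). -/
theorem stmt_15 (α β : ℝ)
    (J : EuclideanSpace ℝ (Fin 8) →ₗ[ℝ] EuclideanSpace ℝ (Fin 8))
    (hJ : ∀ (x : EuclideanSpace ℝ (Fin 8)) (k : Fin 8),
      J x k = if k.val % 2 = 0 then -(x (k + 1)) else x (k - 1))
    (F : EuclideanSpace ℝ (Fin 8) →ₗ[ℝ] EuclideanSpace ℝ (Fin 4))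
    (hF : ∀ x : EuclideanSpace ℝ (Fin 8),
      F x 0 = x 0 ∧ F x 1 = x 1 ∧
      F x 2 = x 2 * Real.cos α - x 4 * Real.sin α ∧
      F x 3 = x 3 * Real.sin β - x 5 * Real.cos β)
    (D₁ D₂ : Submodule ℝ (EuclideanSpace ℝ (Fin 8)))
    (hD₁ : D₁ = Submodule.span ℝ
      {EuclideanSpace.single 6 (1 : ℝ), EuclideanSpace.single 7 (1 : ℝ)})
    (hD₂ : D₂ = Submodule.span ℝ
      {Real.sin α • EuclideanSpace.single 2 (1 : ℝ)
         + Real.cos α • EuclideanSpace.single 4 (1 : ℝ),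
       Real.cos β • EuclideanSpace.single 3 (1 : ℝ)
         + Real.sin β • EuclideanSpace.single 5 (1 : ℝ)}) :
    Function.Surjective F ∧
    (∀ v ∈ (LinearMap.ker F)ᗮ, ‖F v‖ = ‖v‖) ∧
    LinearMap.ker F = D₁ ⊔ D₂ ∧
    (∀ x ∈ D₁, ∀ y ∈ D₂, inner ℝ x y = (0 : ℝ)) ∧
    D₁.map J = D₁ ∧
    (∀ X ∈ D₂, X ≠ 0 →
      Real.cos (InnerProductGeometry.angle (J X)
        (D₂.orthogonalProjectionOnto (J X) : EuclideanSpace ℝ (Fin 8)))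
        = |Real.sin (α + β)|) := by
  have hJ : IsStandardComplexStructure J := hJ
  have hF := apply_eq_of_coords hF
  have hFr := apply_eq_inner_rows hF
  have hD₂ : D₂ = Submodule.span ℝ {slantVec₁ α, slantVec₂ β} := hD₂
  have hD₁J :
      D₁ = Submodule.span ℝ {EuclideanSpace.single 6 1, J (EuclideanSpace.single 6 1)} := by
    rw [hD₁, hJ.apply_single_six]
  refine ⟨LinearMap.surjective_of_orthonormal_rows (orthonormal_rows α β) hFr,
    fun v => LinearMap.norm_apply_eq_of_mem_orthogonal_ker (orthonormal_rows α β) hFr,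
    hD₁ ▸ hD₂ ▸ ker_eq_sup hF, fun x hx y hy => ?_, ?_, fun X hX hX0 => ?_⟩
  · exact (isOrtho_span_single_span_slantVec α β).inner_eq (hD₁ ▸ hx) (hD₂ ▸ hy)
  · rw [hD₁J]
    exact Submodule.map_span_pair_self_apply (by rw [hJ.apply_single_six, hJ.apply_single_seven])
  · subst hD₂
    rw [← Submodule.starProjection_apply, ← hJ.inner_apply_slantVec₁_slantVec₂]
    exact cos_angle_starProjection_span_pair_apply_of_skew hJ.inner_apply_left hJ.norm_apply
      (norm_slantVec₁ α) (norm_slantVec₂ β) (inner_slantVec₁_slantVec₂ α β) hX hX0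
end
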